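/- arXiv:2004.02029 — 2 statements merged into one kernel-verified Lean document; each statement's English description precedes it below -/
import Mathlib

section
/- Assume no Rayleigh anomalies occur, i.e., k_{y,n} ≠ 0 for all n ∈ ℤ. Then for any (x,y), (x',y') ∈ ℝ² with y ≠ y', the series defining the quasi-periodic Green's function, ∑_{n∈ℤ} e^{i k_{x,n}(x−x') + i k_{y,n}|y−y'|} / k_{y,n}, converges absolutely. -/
/-!
Since `k_{x,n}` grows linearly in `|n|`, all but finitely many modes are evanescent:
`k_{y,n} = i s_n` with `s_n = √(k_{x,n}² - k²) ≥ c |n| - C`. For those modes the `n`-th term has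
modulus `e^{-s_n |y - y'|} / s_n`, which is eventually dominated by a geometric series in `|n|`
because `|y - y'| > 0`.
-/

open Filter Real

noncomputable def verticalWavenumber (k t : ℝ) : ℂ :=
  if k ^ 2 ≥ t ^ 2 then ((√(k ^ 2 - t ^ 2) : ℝ) : ℂ) else Complex.I * ((√(t ^ 2 - k ^ 2) : ℝ) : ℂ)

lemma verticalWavenumber_of_sq_lt_sq {k t : ℝ} (h : k ^ 2 < t ^ 2) :
    verticalWavenumber k t = Complex.I * ((√(t ^ 2 - k ^ 2) : ℝ) : ℂ) :=
  if_neg h.not_ge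

lemma le_sqrt_sq_sub_sq {k t c : ℝ} (hc : 0 ≤ c) (h : |k| + c ≤ |t|) : c ≤ √(t ^ 2 - k ^ 2) := by
  have hsq : (|k| + c) ^ 2 ≤ t ^ 2 := by
    rw [← sq_abs t]
    exact pow_le_pow_left₀ (by positivity) h 2
  have hsq' : c ^ 2 ≤ t ^ 2 - k ^ 2 := by nlinarith [sq_abs k, mul_nonneg (abs_nonneg k) hc]
  exact (Real.le_sqrt hc (by nlinarith)).2 hsq'

lemma norm_exp_add_I_mul_I_mul_div (t x x' s d : ℝ) :
    ‖Complex.exp (Complex.I * t * ((x : ℂ) - (x' : ℂ)) + Complex.I * (Complex.I * s) * d)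
        / (Complex.I * s)‖ = exp (-(s * d)) / |s| := by
  rw [norm_div, Complex.norm_exp, norm_mul, Complex.norm_I, one_mul, Complex.norm_real,
    Real.norm_eq_abs]
  congr 2
  simp

lemma norm_exp_div_verticalWavenumber_le {k t c d : ℝ} (x x' : ℝ) (hc : 1 ≤ c) (hd : 0 ≤ d)
    (h : |k| + c ≤ |t|) :
    ‖Complex.exp (Complex.I * t * ((x : ℂ) - (x' : ℂ)) + Complex.I * verticalWavenumber k t * d)
        / verticalWavenumber k t‖ ≤ exp (-(c * d)) := by
  have hlt : k ^ 2 < t ^ 2 := sq_lt_sq.2 (by linarith)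
  have hs : c ≤ √(t ^ 2 - k ^ 2) := le_sqrt_sq_sub_sq (by linarith) h
  set s := √(t ^ 2 - k ^ 2)
  have hs1 : 1 ≤ s := hc.trans hs
  rw [verticalWavenumber_of_sq_lt_sq hlt, norm_exp_add_I_mul_I_mul_div, abs_of_pos (by linarith)]
  calc exp (-(s * d)) / s ≤ exp (-(s * d)) := div_le_self (exp_nonneg _) hs1
    _ ≤ exp (-(c * d)) := exp_le_exp.2 (by nlinarith)

lemma summable_exp_abs_int_mul_of_neg {a : ℝ} (ha : a < 0) :
    Summable fun n : ℤ => exp (|(n : ℝ)| * a) := by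
  have h := summable_exp_nat_mul_iff.2 ha
  exact .of_nat_of_neg (by simpa using h) (by simpa using h)

theorem green_function_series_absolutely_convergent_general (k Λ θi : ℝ) (hΛ : 0 < Λ)
    (kx : ℤ → ℝ) (hkx : ∀ n : ℤ, kx n = k * Real.sin θi + 2 * Real.pi * (n : ℝ) / Λ)
    (ky : ℤ → ℂ)
    (hky : ∀ n : ℤ, ky n =
      if k ^ 2 ≥ (kx n) ^ 2 then ((Real.sqrt (k ^ 2 - (kx n) ^ 2) : ℝ) : ℂ)
      else Complex.I * ((Real.sqrt ((kx n) ^ 2 - k ^ 2) : ℝ) : ℂ))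
    (x y x' y' : ℝ) (hyy : y ≠ y') :
    Summable (fun n : ℤ =>
      ‖Complex.exp (Complex.I * (kx n : ℂ) * ((x : ℂ) - (x' : ℂ))
          + Complex.I * ky n * ((|y - y'| : ℝ) : ℂ)) / ky n‖) := by
  obtain rfl : ky = fun n => verticalWavenumber k (kx n) := funext hky
  set a := k * sin θi
  set b := 2 * π / Λ
  set d := |y - y'|
  have hb : 0 < b := by positivity
  have hd : 0 < d := abs_pos.2 (sub_ne_zero.2 hyy)
  have hkx_ge : ∀ n : ℤ, b * |(n : ℝ)| - |a| ≤ |kx n| := fun n =>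
    calc b * |(n : ℝ)| - |a| = |b * n| - |-a| := by rw [abs_mul b, abs_of_pos hb, abs_neg]
      _ ≤ |b * n - -a| := abs_sub_abs_le_abs_sub _ _
      _ = |kx n| := by rw [hkx n, mul_div_right_comm, sub_neg_eq_add, add_comm]
  have hfar : ∀ᶠ n : ℤ in cofinite, 1 ≤ b * |(n : ℝ)| - |a| - |k| := by
    filter_upwards [(tendsto_norm_cocompact_atTop.comp Int.tendsto_coe_cofinite).eventually_ge_atTop
      ((1 + |a| + |k|) / b)] with n hn
    rw [Function.comp_apply, Real.norm_eq_abs, div_le_iff₀ hb] at hn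
    linarith
  refine .of_norm_bounded_eventually
    ((summable_exp_abs_int_mul_of_neg (neg_neg_of_pos (mul_pos hb hd))).mul_left
      (exp ((|a| + |k|) * d))) ?_
  filter_upwards [hfar] with n hn
  rw [norm_norm, ← exp_add]
  calc _ ≤ exp (-((b * |(n : ℝ)| - |a| - |k|) * d)) :=
        norm_exp_div_verticalWavenumber_le x x' hn hd.le (by linarith [hkx_ge n])
    _ = _ := by ring_nf

/-- Absolute convergence of the series defining the quasi-periodic Green's function:
assuming no Rayleigh anomalies (`k_{y,n} ≠ 0` for all `n`), for any points with `y ≠ y'`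
the series `∑_{n∈ℤ} e^{i k_{x,n}(x-x') + i k_{y,n}|y-y'|} / k_{y,n}` converges absolutely. -/
theorem green_function_series_absolutely_convergent (k Λ θi : ℝ) (hk : 0 < k) (hΛ : 0 < Λ)
    (hθ : θi ∈ Set.Ioo (-(Real.pi / 2)) (Real.pi / 2))
    (kx : ℤ → ℝ) (hkx : ∀ n : ℤ, kx n = k * Real.sin θi + 2 * Real.pi * (n : ℝ) / Λ)
    (ky : ℤ → ℂ)
    (hky : ∀ n : ℤ, ky n =
      if k ^ 2 ≥ (kx n) ^ 2 then ((Real.sqrt (k ^ 2 - (kx n) ^ 2) : ℝ) : ℂ)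
      else Complex.I * ((Real.sqrt ((kx n) ^ 2 - k ^ 2) : ℝ) : ℂ))
    (hnoanom : ∀ n : ℤ, ky n ≠ 0)
    (x y x' y' : ℝ) (hyy : y ≠ y') :
    Summable (fun n : ℤ =>
      ‖Complex.exp (Complex.I * (kx n : ℂ) * ((x : ℂ) - (x' : ℂ))
          + Complex.I * ky n * ((|y - y'| : ℝ) : ℂ)) / ky n‖) :=
  green_function_series_absolutely_convergent_general k Λ θi hΛ kx hkx ky hky x y x' y' hyy
end

section
/- Let B be a real symmetric positive definite n×n matrix and let s, y ∈ ℝⁿ with s ≠ 0 and sᵀy > 0. Then the BFGS update B' := B − (B s sᵀ B)/(sᵀ B s) + (y yᵀ)/(sᵀ y) is symmetric and positive definite. -/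
open Matrix

/-! The quadratic form of the update at `x` is
`(xᵀBx - (sᵀBx)² / sᵀBs) + (yᵀx)² / sᵀy`. Completing the square shows that the first term is
`wᵀBw` for `w = x - (sᵀBx / sᵀBs) s`, so it is nonnegative and vanishes only when `x` is a
multiple of `s`; on a nonzero multiple of `s` the second term is positive because `sᵀy > 0`. -/

namespace Matrix

lemma isSymm_vecMulVec_self {α n : Type*} [CommMagma α] (u : n → α) :
    (vecMulVec u u).IsSymm :=
  transpose_vecMulVec u u

lemma PosDef.isSymm {n : Type*} {B : Matrix n n ℝ} (hB : B.PosDef) : B.IsSymm :=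
  isHermitian_iff_isSymm.mp hB.isHermitian

variable {ι : Type*} [Fintype ι]

lemma dotProduct_vecMulVec_mulVec {α : Type*} [CommSemiring α] (u v x : ι → α) :
    x ⬝ᵥ vecMulVec u v *ᵥ x = (x ⬝ᵥ u) * (v ⬝ᵥ x) := by
  rw [vecMulVec_mulVec, dotProduct_smul, MulOpposite.smul_eq_mul_unop, MulOpposite.unop_op,
    mul_comm]

section Symmetric

variable {α : Type*} [CommSemiring α] {B : Matrix ι ι α}

lemma IsSymm.vecMul_eq_mulVec (hB : B.IsSymm) (x : ι → α) : x ᵥ* B = B *ᵥ x := by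
  rw [← vecMul_transpose, hB.eq]

lemma IsSymm.dotProduct_mulVec_comm (hB : B.IsSymm) (x y : ι → α) :
    x ⬝ᵥ B *ᵥ y = y ⬝ᵥ B *ᵥ x := by
  rw [dotProduct_mulVec, hB.vecMul_eq_mulVec, dotProduct_comm]

end Symmetric

/-- When `s ⬝ᵥ B *ᵥ s = 0` both sides are `x ⬝ᵥ B *ᵥ x`, because division by zero gives `0`. -/
lemma IsSymm.dotProduct_mulVec_sub_proj {K : Type*} [Field K] {B : Matrix ι ι K}
    (hB : B.IsSymm) (s x : ι → K) :
    let w := x - ((s ⬝ᵥ B *ᵥ x) / (s ⬝ᵥ B *ᵥ s)) • s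
    w ⬝ᵥ B *ᵥ w = x ⬝ᵥ B *ᵥ x - (s ⬝ᵥ B *ᵥ x) ^ 2 / (s ⬝ᵥ B *ᵥ s) := by
  intro w
  have hexpand : w ⬝ᵥ B *ᵥ w = x ⬝ᵥ B *ᵥ x - 2 * ((s ⬝ᵥ B *ᵥ x) / (s ⬝ᵥ B *ᵥ s)) * (s ⬝ᵥ B *ᵥ x)
      + ((s ⬝ᵥ B *ᵥ x) / (s ⬝ᵥ B *ᵥ s)) ^ 2 * (s ⬝ᵥ B *ᵥ s) := by
    simp only [w, mulVec_sub, mulVec_smul, dotProduct_sub, sub_dotProduct, dotProduct_smul,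
      smul_dotProduct, smul_eq_mul, hB.dotProduct_mulVec_comm x s]
    ring
  rw [hexpand]
  rcases eq_or_ne (s ⬝ᵥ B *ᵥ s) 0 with ha | ha
  · simp [ha]
  · field_simp
    ring

variable {B : Matrix ι ι ℝ}

lemma PosDef.sq_dotProduct_mulVec_div_le (hB : B.PosDef) (s x : ι → ℝ) :
    (s ⬝ᵥ B *ᵥ x) ^ 2 / (s ⬝ᵥ B *ᵥ s) ≤ x ⬝ᵥ B *ᵥ x := by
  have h := hB.posSemidef.dotProduct_mulVec_nonneg (x - ((s ⬝ᵥ B *ᵥ x) / (s ⬝ᵥ B *ᵥ s)) • s)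
  rw [star_trivial, hB.isSymm.dotProduct_mulVec_sub_proj] at h
  linarith

lemma PosDef.sq_dotProduct_mulVec_div_lt (hB : B.PosDef) {s x : ι → ℝ}
    (hx : ∀ c : ℝ, x ≠ c • s) :
    (s ⬝ᵥ B *ᵥ x) ^ 2 / (s ⬝ᵥ B *ᵥ s) < x ⬝ᵥ B *ᵥ x := by
  have hw : x - ((s ⬝ᵥ B *ᵥ x) / (s ⬝ᵥ B *ᵥ s)) • s ≠ 0 := sub_ne_zero.mpr (hx _)
  have h := hB.dotProduct_mulVec_pos hw
  rw [star_trivial, hB.isSymm.dotProduct_mulVec_sub_proj] at h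
  linarith

noncomputable def bfgsUpdate (B : Matrix ι ι ℝ) (s y : ι → ℝ) : Matrix ι ι ℝ :=
  B - (s ⬝ᵥ B *ᵥ s)⁻¹ • vecMulVec (B *ᵥ s) (s ᵥ* B) + (s ⬝ᵥ y)⁻¹ • vecMulVec y y

lemma IsSymm.bfgsUpdate (hB : B.IsSymm) (s y : ι → ℝ) : (Matrix.bfgsUpdate B s y).IsSymm := by
  rw [Matrix.bfgsUpdate, hB.vecMul_eq_mulVec]
  exact (hB.sub ((isSymm_vecMulVec_self _).smul _)).add ((isSymm_vecMulVec_self _).smul _)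

lemma IsSymm.dotProduct_bfgsUpdate_mulVec (hB : B.IsSymm) (s y x : ι → ℝ) :
    x ⬝ᵥ Matrix.bfgsUpdate B s y *ᵥ x
      = x ⬝ᵥ B *ᵥ x - (s ⬝ᵥ B *ᵥ x) ^ 2 / (s ⬝ᵥ B *ᵥ s) + (y ⬝ᵥ x) ^ 2 / (s ⬝ᵥ y) := by
  simp only [Matrix.bfgsUpdate, hB.vecMul_eq_mulVec, add_mulVec, sub_mulVec, smul_mulVec,
    dotProduct_add, dotProduct_sub, dotProduct_smul, dotProduct_vecMulVec_mulVec, smul_eq_mul,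
    dotProduct_comm x y, dotProduct_comm (B *ᵥ s) x, hB.dotProduct_mulVec_comm x s]
  ring

lemma PosDef.bfgsUpdate (hB : B.PosDef) {s y : ι → ℝ} (hsy : 0 < s ⬝ᵥ y) :
    (Matrix.bfgsUpdate B s y).PosDef := by
  refine .of_dotProduct_mulVec_pos (isHermitian_iff_isSymm.mpr (hB.isSymm.bfgsUpdate s y))
    fun x hx => ?_
  rw [star_trivial, hB.isSymm.dotProduct_bfgsUpdate_mulVec]
  by_cases hxs : ∃ c : ℝ, x = c • s
  · obtain ⟨c, rfl⟩ := hxs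
    have hc : c ≠ 0 := by rintro rfl; exact hx (zero_smul ℝ s)
    have hyx : y ⬝ᵥ c • s ≠ 0 := by
      rw [dotProduct_smul, smul_eq_mul, dotProduct_comm]
      exact mul_ne_zero hc hsy.ne'
    have hproj := hB.sq_dotProduct_mulVec_div_le s (c • s)
    have hcurv : 0 < (y ⬝ᵥ c • s) ^ 2 / (s ⬝ᵥ y) := by positivity
    linarith
  · simp only [not_exists] at hxs
    have hproj := hB.sq_dotProduct_mulVec_div_lt hxs
    have hcurv : 0 ≤ (y ⬝ᵥ x) ^ 2 / (s ⬝ᵥ y) := by positivity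
    linarith

end Matrix

theorem bfgs_update_posdef_general (n : ℕ) (B : Matrix (Fin n) (Fin n) ℝ)
    (hBpd : B.PosDef)
    (s y : Fin n → ℝ) (hsy : 0 < s ⬝ᵥ y)
    (B' : Matrix (Fin n) (Fin n) ℝ)
    (hB' : B' = B - (s ⬝ᵥ B.mulVec s)⁻¹ • vecMulVec (B.mulVec s) (vecMul s B)
      + (s ⬝ᵥ y)⁻¹ • vecMulVec y y) :
    B'.IsSymm ∧ B'.PosDef := by
  subst hB'
  exact ⟨hBpd.isSymm.bfgsUpdate s y, hBpd.bfgsUpdate hsy⟩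

/-- The BFGS update preserves symmetric positive definiteness: if `B` is real symmetric
positive definite, `s ≠ 0` and `sᵀy > 0`, then
`B' = B − (B s sᵀ B)/(sᵀ B s) + (y yᵀ)/(sᵀ y)` is symmetric positive definite. -/
theorem bfgs_update_posdef (n : ℕ) (B : Matrix (Fin n) (Fin n) ℝ)
    (hBsymm : B.IsSymm) (hBpd : B.PosDef)
    (s y : Fin n → ℝ) (hs : s ≠ 0) (hsy : 0 < s ⬝ᵥ y)
    (B' : Matrix (Fin n) (Fin n) ℝ)
    (hB' : B' = B - (s ⬝ᵥ B.mulVec s)⁻¹ • vecMulVec (B.mulVec s) (vecMul s B)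
      + (s ⬝ᵥ y)⁻¹ • vecMulVec y y) :
    B'.IsSymm ∧ B'.PosDef :=
  bfgs_update_posdef_general n B hBpd s y hsy B' hB'
end
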